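/- (Theorem 3.1, Poisson approximation) Let X₁, X₂, … be an infinite sequence of independent random points, each uniformly distributed on the unit sphere S² ⊂ ℝ³. Fix c > 0 and α > 2, and for each N ≥ 2 with c/N^α < 1 set p_N = c/N^α and a_N = 2·arcsin(√p_N). Let |𝓔_N| be the number of edges of the random intersection graph G_N on vertex set {1,…,N} built from X₁,…,X_N with caps of angular radius a_N, and let λ_N = E[|𝓔_N|] = 2N(N−1)p_N(1−p_N). Then the total variation distance between the distribution of |𝓔_N| and the Poisson distribution with parameter λ_N tends to 0 as N → ∞; concretely, ∑_{k=0}^{∞} | P[|𝓔_N| = k] − e^{−λ_N} λ_N^k / k! | → 0 as N → ∞. -/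

import Mathlib

open MeasureTheory Real Set
open scoped ENNReal RealInnerProductSpace

/-- The unit sphere `S²` in `ℝ³`. -/
noncomputable def S2 : Set (EuclideanSpace ℝ (Fin 3)) :=
  Metric.sphere (0 : EuclideanSpace ℝ (Fin 3)) 1

/-- The uniform probability measure on the unit sphere `S² ⊂ ℝ³`: the rotation-invariant
surface (2-dimensional Hausdorff) measure restricted to the sphere, normalized by the total
surface area `4π`. -/
noncomputable def sphereUniform : Measure (EuclideanSpace ℝ (Fin 3)) :=
  (ENNReal.ofReal (4 * π))⁻¹ •
    (μH[2] : Measure (EuclideanSpace ℝ (Fin 3))).restrict S2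

/-- The angular distance `θ(x,y) = arccos ⟪x,y⟫` between two points of the sphere. -/
noncomputable def angDist (x y : EuclideanSpace ℝ (Fin 3)) : ℝ :=
  Real.arccos ⟪x, y⟫

/-!
Since `α > 2`, the mean number of edges `λ_N ≤ 2 N² p_N` tends to `0`, so it suffices that both
`|𝓔_N|` and `Poisson(λ_N)` put almost all of their mass at `0`: for any two probability
distributions on `ℕ`, `∑ |a_k - b_k| ≤ 2 (1 - a_0) + 2 (1 - b_0)`, and `1 - e^{-λ} ≤ λ`.
By a union bound over the `≤ N²` pairs and independence, `P(|𝓔_N| ≠ 0)` is at most `N²` times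
the normalized area of a cap of radius `2 a_N = O(√p_N)`. That area is `O(a_N²)` because the cap
is the image of a square of side `O(a_N)` in the tangent plane under the inverse gnomonic
projection, which is Lipschitz, and Lipschitz maps enlarge `μH[2]` by at most a constant factor.
-/

open Filter Topology ProbabilityTheory Metric
open scoped NNReal

lemma norm_inv_smul_sub_inv_smul_le {E : Type*} [NormedAddCommGroup E] [NormedSpace ℝ E]
    {a b : E} (ha : 1 ≤ ‖a‖) (hb : 1 ≤ ‖b‖) :
    ‖‖a‖⁻¹ • a - ‖b‖⁻¹ • b‖ ≤ 2 * ‖a - b‖ := by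
  have ha₀ : 0 < ‖a‖ := one_pos.trans_le ha
  have hb₀ : 0 < ‖b‖ := one_pos.trans_le hb
  have hsplit : ‖a‖⁻¹ • a - ‖b‖⁻¹ • b = ‖a‖⁻¹ • (a - b) + (‖a‖⁻¹ - ‖b‖⁻¹) • b := by
    rw [smul_sub, sub_smul]; abel
  have h₁ : ‖‖a‖⁻¹ • (a - b)‖ ≤ ‖a - b‖ := by
    rw [norm_smul, norm_inv, norm_norm]
    exact mul_le_of_le_one_left (norm_nonneg _) (inv_le_one_of_one_le₀ ha)
  have h₂ : ‖(‖a‖⁻¹ - ‖b‖⁻¹) • b‖ ≤ ‖a - b‖ := by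
    rw [norm_smul, inv_sub_inv ha₀.ne' hb₀.ne', norm_div, Real.norm_eq_abs, Real.norm_eq_abs,
      abs_of_pos (mul_pos ha₀ hb₀), div_mul_eq_mul_div, div_le_iff₀ (mul_pos ha₀ hb₀),
      abs_sub_comm]
    calc |‖a‖ - ‖b‖| * ‖b‖ ≤ ‖a - b‖ * ‖b‖ := by gcongr; exact abs_norm_sub_norm_le a b
      _ ≤ ‖a - b‖ * (‖a‖ * ‖b‖) := by gcongr; exact le_mul_of_one_le_left hb₀.le ha
  rw [hsplit]
  linarith [norm_add_le (‖a‖⁻¹ • (a - b)) ((‖a‖⁻¹ - ‖b‖⁻¹) • b)]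

section Gnomonic

variable {E : Type*} [NormedAddCommGroup E] [InnerProductSpace ℝ E] {ι : Type*} [Fintype ι]

/-- Radial projection onto the unit sphere of the point `x + ∑ i, p i • v i`; for a unit vector
`x` and an orthonormal basis `v` of `x^⊥` this is the inverse of the gnomonic projection of the
hemisphere around `x` onto its tangent plane. -/
noncomputable def gnomonicChart (x : E) (v : ι → E) (p : ι → ℝ) : E :=
  ‖x + ∑ i, p i • v i‖⁻¹ • (x + ∑ i, p i • v i)

lemma lipschitzWith_gnomonicChart {x : E} (hx : ‖x‖ = 1) {v : ι → E}
    (hxv : ∀ i, ⟪x, v i⟫ = 0) (hv : ∀ i, ‖v i‖ ≤ 1) :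
    LipschitzWith (2 * Fintype.card ι) (gnomonicChart x v) := by
  have hone_le : ∀ p : ι → ℝ, 1 ≤ ‖x + ∑ i, p i • v i‖ := fun p ↦ by
    have horth : ⟪x, ∑ i, p i • v i⟫ = 0 := by simp [inner_sum, inner_smul_right, hxv]
    have := norm_add_sq_eq_norm_sq_add_norm_sq_real horth
    rw [hx] at this
    nlinarith [norm_nonneg (x + ∑ i, p i • v i), norm_nonneg (∑ i, p i • v i)]
  refine LipschitzWith.of_dist_le_mul fun p q ↦ ?_
  rw [dist_eq_norm, dist_eq_norm]
  have hlin : ‖(x + ∑ i, p i • v i) - (x + ∑ i, q i • v i)‖ ≤ Fintype.card ι * ‖p - q‖ := by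
    calc ‖(x + ∑ i, p i • v i) - (x + ∑ i, q i • v i)‖ = ‖∑ i, (p - q) i • v i‖ := by
          simp [sub_smul, Finset.sum_sub_distrib]
      _ ≤ ∑ i, ‖(p - q) i • v i‖ := norm_sum_le _ _
      _ ≤ ∑ _i : ι, ‖p - q‖ := by
          gcongr with i
          rw [norm_smul]
          exact mul_le_of_le_one_right (norm_nonneg _) (hv i) |>.trans (norm_le_pi_norm _ i)
      _ = Fintype.card ι * ‖p - q‖ := by simp
  calc ‖gnomonicChart x v p - gnomonicChart x v q‖
      ≤ 2 * ‖(x + ∑ i, p i • v i) - (x + ∑ i, q i • v i)‖ :=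
        norm_inv_smul_sub_inv_smul_le (hone_le p) (hone_le q)
    _ ≤ ((2 * Fintype.card ι : ℝ≥0) : ℝ) * ‖p - q‖ := by push_cast; linarith


lemma sphere_cap_subset_image_gnomonicChart {x : E} (hx : ‖x‖ = 1)
    (b : OrthonormalBasis ι ℝ (ℝ ∙ x)ᗮ) {r : ℝ} (hr : r ≤ π / 3) :
    sphere 0 1 ∩ {y | Real.arccos ⟪x, y⟫ ≤ r} ⊆
      gnomonicChart x (fun i ↦ (b i : E)) '' closedBall 0 (2 * r) := by
  rintro y ⟨hy, hyr⟩
  rw [mem_sphere_zero_iff_norm] at hy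
  set c := ⟪x, y⟫
  have hc : |c| ≤ 1 := by simpa [hx, hy] using abs_real_inner_le_norm x y
  have hc_half : 1 / 2 ≤ c := by
    have := Real.cos_le_cos_of_nonneg_of_le_pi (Real.arccos_nonneg c) (by linarith [Real.pi_pos])
      (hyr.trans hr)
    rwa [Real.cos_pi_div_three, Real.cos_arccos (abs_le.1 hc).1 (abs_le.1 hc).2] at this
  have hc₀ : 0 < c := by linarith
  set w := y - c • x
  have hxw : ⟪x, w⟫ = 0 := by
    simp [w, inner_sub_right, inner_smul_right, hx, c]
  have hw : ‖w‖ ≤ r := by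
    have hw_sq : ‖w‖ ^ 2 = 1 - c ^ 2 := by
      rw [@norm_sub_sq_real, inner_smul_right, real_inner_comm, norm_smul, hy, hx,
        Real.norm_eq_abs, mul_one, sq_abs]
      ring
    calc ‖w‖ = Real.sin (Real.arccos c) := by
          rw [Real.sin_arccos, ← hw_sq, Real.sqrt_sq (norm_nonneg _)]
      _ ≤ Real.arccos c := Real.sin_le (Real.arccos_nonneg c)
      _ ≤ r := hyr
  -- `y` is the radial projection of `x + c⁻¹ • w = c⁻¹ • y`
  set w' : (ℝ ∙ x)ᗮ := ⟨c⁻¹ • w, Submodule.smul_mem _ _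
    (Submodule.mem_orthogonal_singleton_iff_inner_right.2 hxw)⟩
  refine ⟨fun i ↦ ⟪(b i : E), c⁻¹ • w⟫, ?_, ?_⟩
  · rw [mem_closedBall_zero_iff, pi_norm_le_iff_of_nonneg (by linarith [norm_nonneg w])]
    intro i
    calc ‖⟪(b i : E), c⁻¹ • w⟫‖ ≤ ‖(b i : E)‖ * ‖c⁻¹ • w‖ := norm_inner_le_norm _ _
      _ = c⁻¹ * ‖w‖ := by
          rw [show ‖(b i : E)‖ = 1 from b.orthonormal.1 i, one_mul, norm_smul, Real.norm_eq_abs,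
            abs_of_pos (inv_pos.2 hc₀)]
      _ ≤ 2 * r := by
          rw [inv_mul_le_iff₀ hc₀]
          nlinarith [norm_nonneg w]
  · have hsum : ∑ i, ⟪(b i : E), c⁻¹ • w⟫ • (b i : E) = c⁻¹ • w := by
      simpa [w'] using congrArg Subtype.val (b.sum_repr' w')
    have hxy : x + c⁻¹ • w = c⁻¹ • y := by
      rw [smul_sub, smul_smul, inv_mul_cancel₀ hc₀.ne', one_smul, add_sub_cancel]
    rw [gnomonicChart, hsum, hxy, norm_smul, hy, Real.norm_eq_abs, abs_of_pos (inv_pos.2 hc₀),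
      mul_one, inv_inv, smul_smul, mul_inv_cancel₀ hc₀.ne', one_smul]

end Gnomonic

lemma hausdorffMeasure_sphere_cap_le {E : Type*} [NormedAddCommGroup E] [InnerProductSpace ℝ E]
    [FiniteDimensional ℝ E] [MeasurableSpace E] [BorelSpace E] {n : ℕ}
    (hE : Module.finrank ℝ E = n + 1) {x : E} (hx : ‖x‖ = 1) {r : ℝ} (hr₀ : 0 ≤ r)
    (hr : r ≤ π / 3) :
    μH[n] (sphere (0 : E) 1 ∩ {y | Real.arccos ⟪x, y⟫ ≤ r}) ≤ ENNReal.ofReal ((8 * n * r) ^ n) := by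
  have : Fact (Module.finrank ℝ E = n + 1) := ⟨hE⟩
  have hx₀ : x ≠ 0 := norm_ne_zero_iff.1 (by rw [hx]; exact one_ne_zero)
  let b : OrthonormalBasis (Fin n) ℝ (ℝ ∙ x)ᗮ := (stdOrthonormalBasis ℝ _).reindex
    (finCongr (Submodule.finrank_orthogonal_span_singleton hx₀))
  have hlip := lipschitzWith_gnomonicChart hx (v := fun i ↦ (b i : E))
    (fun i ↦ Submodule.mem_orthogonal_singleton_iff_inner_right.1 (b i).2)
    (fun i ↦ (b.orthonormal.1 i).le)
  calc μH[n] (sphere (0 : E) 1 ∩ {y | Real.arccos ⟪x, y⟫ ≤ r})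
      ≤ μH[n] (gnomonicChart x (fun i ↦ (b i : E)) '' closedBall 0 (2 * r)) :=
        measure_mono (sphere_cap_subset_image_gnomonicChart hx b hr)
    _ ≤ ((2 * n : ℝ≥0) : ℝ≥0∞) ^ (n : ℝ) * μH[n] (closedBall (0 : Fin n → ℝ) (2 * r)) := by
        simpa using hlip.hausdorffMeasure_image_le (Nat.cast_nonneg n) (closedBall 0 (2 * r))
    _ = ENNReal.ofReal ((8 * n * r) ^ n) := by
        have hμH : (μH[n] : Measure (Fin n → ℝ)) = volume := by
          simpa using hausdorffMeasure_pi_real (ι := Fin n)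
        rw [hμH, Real.volume_pi_closedBall _ (by positivity), ENNReal.rpow_natCast,
          Fintype.card_fin, ← ENNReal.ofReal_coe_nnreal, ← ENNReal.ofReal_pow (by positivity),
          ← ENNReal.ofReal_mul (by positivity), ← mul_pow]
        congr 2
        push_cast
        ring

lemma measurableSet_S2 : MeasurableSet S2 := isClosed_sphere.measurableSet

lemma sphereUniform_cap_le {x : EuclideanSpace ℝ (Fin 3)} (hx : x ∈ S2) {r : ℝ} (hr₀ : 0 ≤ r)
    (hr : r ≤ π / 3) :
    sphereUniform {y | Real.arccos ⟪x, y⟫ ≤ r} ≤ ENNReal.ofReal ((16 * r) ^ 2) := by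
  have hcap := hausdorffMeasure_sphere_cap_le (n := 2) (by simp) (mem_sphere_zero_iff_norm.1 hx)
    hr₀ hr
  have hscale : (ENNReal.ofReal (4 * π))⁻¹ ≤ 1 :=
    ENNReal.inv_le_one.2 (ENNReal.one_le_ofReal.2 (by linarith [Real.pi_gt_three]))
  rw [sphereUniform, Measure.smul_apply, Measure.restrict_apply' measurableSet_S2,
    smul_eq_mul, inter_comm]
  calc _ ≤ 1 * ENNReal.ofReal ((8 * 2 * r) ^ 2) := mul_le_mul' hscale (by simpa [S2] using hcap)
    _ = ENNReal.ofReal ((16 * r) ^ 2) := by norm_num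

lemma ae_mem_S2_sphereUniform : ∀ᵐ x ∂sphereUniform, x ∈ S2 :=
  Measure.ae_smul_measure (ae_restrict_mem measurableSet_S2) _

lemma measure_prodMk_mem_le_of_indepFun {Ω α β : Type*} [MeasurableSpace Ω] [MeasurableSpace α]
    [MeasurableSpace β] {P : Measure Ω} [IsProbabilityMeasure P] {X : Ω → α} {Y : Ω → β}
    (hX : Measurable X) (hY : Measurable Y) (hXY : IndepFun X Y P) {B : Set (α × β)}
    (hB : MeasurableSet B) {ε : ℝ≥0∞}
    (hε : ∀ᵐ x ∂(P.map X), P.map Y (Prod.mk x ⁻¹' B) ≤ ε) :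
    P {ω | (X ω, Y ω) ∈ B} ≤ ε := by
  have : IsProbabilityMeasure (P.map X) := Measure.isProbabilityMeasure_map hX.aemeasurable
  calc P {ω | (X ω, Y ω) ∈ B} = (P.map X).prod (P.map Y) B := by
        rw [← (indepFun_iff_map_prod_eq_prod_map_map hX.aemeasurable hY.aemeasurable).1 hXY,
          Measure.map_apply (hX.prodMk hY) hB]
        rfl
    _ = ∫⁻ x, P.map Y (Prod.mk x ⁻¹' B) ∂(P.map X) := Measure.prod_apply hB
    _ ≤ ∫⁻ _, ε ∂(P.map X) := lintegral_mono_ae hε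
    _ = ε := by simp

lemma measure_angDist_le_le {Ω : Type*} [MeasurableSpace Ω] {P : Measure Ω}
    [IsProbabilityMeasure P] {Y Z : Ω → EuclideanSpace ℝ (Fin 3)} (hY : Measurable Y)
    (hZ : Measurable Z) (hYZ : IndepFun Y Z P) (hYlaw : P.map Y = sphereUniform)
    (hZlaw : P.map Z = sphereUniform) {r : ℝ} (hr₀ : 0 ≤ r) (hr : r ≤ π / 3) :
    P {ω | angDist (Y ω) (Z ω) ≤ r} ≤ ENNReal.ofReal ((16 * r) ^ 2) := by
  refine measure_prodMk_mem_le_of_indepFun hY hZ hYZ (B := {z | Real.arccos ⟪z.1, z.2⟫ ≤ r})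
    (measurableSet_le (by fun_prop) measurable_const) ?_
  rw [hYlaw, hZlaw]
  filter_upwards [ae_mem_S2_sphereUniform] with x hx
  exact sphereUniform_cap_le hx hr₀ hr

/-- `|𝓔_N|` for the graph on `{0, …, N - 1}` in which `i ~ j` iff `Adj (x i) (x j)`. -/
noncomputable def pairCount {α : Type*} (N : ℕ) (Adj : α → α → Prop) (x : ℕ → α) : ℕ :=
  Set.ncard {q : ℕ × ℕ | q.1 < q.2 ∧ q.2 < N ∧ Adj (x q.1) (x q.2)}

def orderedPairs (N : ℕ) : Finset (ℕ × ℕ) :=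
  {q ∈ Finset.range N ×ˢ Finset.range N | q.1 < q.2}

lemma mem_orderedPairs {N : ℕ} {q : ℕ × ℕ} : q ∈ orderedPairs N ↔ q.1 < q.2 ∧ q.2 < N := by
  simp only [orderedPairs, Finset.mem_filter, Finset.mem_product, Finset.mem_range]
  constructor
  · rintro ⟨⟨-, h₂⟩, h₁⟩; exact ⟨h₁, h₂⟩
  · rintro ⟨h₁, h₂⟩; exact ⟨⟨h₁.trans h₂, h₂⟩, h₁⟩

lemma card_orderedPairs_le (N : ℕ) : (orderedPairs N).card ≤ N ^ 2 := by
  calc (orderedPairs N).card ≤ (Finset.range N ×ˢ Finset.range N).card := Finset.card_filter_le _ _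
    _ = N ^ 2 := by simp [sq]

lemma pairCount_eq_sum {α : Type*} (N : ℕ) (Adj : α → α → Prop) [DecidableRel Adj]
    (x : ℕ → α) :
    pairCount N Adj x = ∑ q ∈ orderedPairs N, if Adj (x q.1) (x q.2) then 1 else 0 := by
  rw [← Finset.card_filter, pairCount, ← Set.ncard_coe_finset]
  congr 1
  ext q
  simp [mem_orderedPairs, and_assoc]

section RandomPairCount

variable {Ω α : Type*} [MeasurableSpace Ω] {P : Measure Ω} {X : ℕ → Ω → α} {Adj : α → α → Prop}

lemma measurable_pairCount (N : ℕ)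
    (hAdj : ∀ i j, MeasurableSet {ω | Adj (X i ω) (X j ω)}) :
    Measurable fun ω ↦ pairCount N Adj (X · ω) := by
  classical
  simp_rw [pairCount_eq_sum]
  exact Finset.measurable_sum _ fun q _ ↦
    Measurable.ite (hAdj q.1 q.2) measurable_const measurable_const

lemma measure_pairCount_ne_zero_le (N : ℕ) {ε : ℝ≥0∞}
    (hε : ∀ i j, i < j → P {ω | Adj (X i ω) (X j ω)} ≤ ε) :
    P {ω | pairCount N Adj (X · ω) ≠ 0} ≤ N ^ 2 * ε := by
  have hsub : {ω | pairCount N Adj (X · ω) ≠ 0} ⊆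
      ⋃ q ∈ orderedPairs N, {ω | Adj (X q.1 ω) (X q.2 ω)} := by
    intro ω hω
    obtain ⟨q, h₁, h₂, hq⟩ := Set.nonempty_of_ncard_ne_zero hω
    exact Set.mem_biUnion (mem_orderedPairs.2 ⟨h₁, h₂⟩) hq
  calc P {ω | pairCount N Adj (X · ω) ≠ 0}
      ≤ ∑ q ∈ orderedPairs N, P {ω | Adj (X q.1 ω) (X q.2 ω)} :=
        (measure_mono hsub).trans (measure_biUnion_finset_le _ _)
    _ ≤ ∑ _q ∈ orderedPairs N, ε :=
        Finset.sum_le_sum fun q hq ↦ hε _ _ (mem_orderedPairs.1 hq).1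
    _ ≤ N ^ 2 * ε := by
        rw [Finset.sum_const, nsmul_eq_mul]
        gcongr
        exact_mod_cast card_orderedPairs_le N

end RandomPairCount

lemma tsum_abs_sub_le_of_hasSum_one {a b : ℕ → ℝ} (ha₀ : ∀ k, 0 ≤ a k) (hb₀ : ∀ k, 0 ≤ b k)
    (ha : HasSum a 1) (hb : HasSum b 1) :
    ∑' k, |a k - b k| ≤ 2 * (1 - a 0) + 2 * (1 - b 0) := by
  have ha_tail : HasSum (fun k ↦ a (k + 1)) (1 - a 0) := by
    simpa using (hasSum_nat_add_iff' 1).2 ha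
  have hb_tail : HasSum (fun k ↦ b (k + 1)) (1 - b 0) := by
    simpa using (hasSum_nat_add_iff' 1).2 hb
  have habs_le : ∀ k, |a k - b k| ≤ a k + b k := fun k ↦
    (abs_sub _ _).trans_eq (by rw [abs_of_nonneg (ha₀ k), abs_of_nonneg (hb₀ k)])
  have hsum : Summable fun k ↦ |a k - b k| :=
    (ha.summable.add hb.summable).of_nonneg_of_le (fun _ ↦ abs_nonneg _) habs_le
  have htail : ∑' k, |a (k + 1) - b (k + 1)| ≤ (1 - a 0) + (1 - b 0) :=
    hasSum_le (fun k ↦ habs_le (k + 1)) ((summable_nat_add_iff 1).2 hsum).hasSum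
      (ha_tail.add hb_tail)
  have ha0 : a 0 ≤ 1 := le_hasSum ha 0 fun k _ ↦ ha₀ k
  have hb0 : b 0 ≤ 1 := le_hasSum hb 0 fun k _ ↦ hb₀ k
  have h₀ : |a 0 - b 0| ≤ (1 - a 0) + (1 - b 0) :=
    abs_sub_le_iff.2 ⟨by linarith [hb₀ 0], by linarith [ha₀ 0]⟩
  rw [hsum.tsum_eq_zero_add]
  linarith

lemma hasSum_measure_preimage_singleton_toReal {Ω : Type*} [MeasurableSpace Ω] (P : Measure Ω)
    [IsProbabilityMeasure P] {F : Ω → ℕ} (hF : Measurable F) :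
    HasSum (fun k ↦ (P (F ⁻¹' {k})).toReal) 1 := by
  have h : ∑' k, P (F ⁻¹' {k}) = 1 := by
    rw [← measure_iUnion (fun i j hij ↦ (disjoint_singleton.2 hij).preimage F)
      (fun k ↦ hF (measurableSet_singleton k)), ← preimage_iUnion, iUnion_of_singleton,
      preimage_univ, measure_univ]
  have := ENNReal.hasSum_toReal (h.symm ▸ ENNReal.one_ne_top)
  rwa [← ENNReal.tsum_toReal_eq fun _ ↦ measure_ne_top P _, h, ENNReal.toReal_one] at this

lemma tsum_abs_measure_sub_poisson_le {Ω : Type*} [MeasurableSpace Ω] (P : Measure Ω)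
    [IsProbabilityMeasure P] {F : Ω → ℕ} (hF : Measurable F) {lam : ℝ} (hlam : 0 ≤ lam) :
    ∑' k : ℕ, |(P {ω | F ω = k}).toReal - Real.exp (-lam) * lam ^ k / (k.factorial : ℝ)|
      ≤ 2 * (P {ω | F ω ≠ 0}).toReal + 2 * lam := by
  have hpoisson := hasSum_one_poissonMeasure lam.toNNReal
  rw [Real.coe_toNNReal _ hlam] at hpoisson
  refine (tsum_abs_sub_le_of_hasSum_one (fun _ ↦ ENNReal.toReal_nonneg) (fun _ ↦ by positivity)
    (hasSum_measure_preimage_singleton_toReal P hF) hpoisson).trans ?_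
  have hF0 : 1 - (P (F ⁻¹' {0})).toReal = (P {ω | F ω ≠ 0}).toReal :=
    (probReal_compl_eq_one_sub (hF (measurableSet_singleton 0))).symm
  have hexp : 1 - Real.exp (-lam) ≤ lam := by linarith [Real.add_one_le_exp (-lam)]
  simp only [pow_zero, Nat.factorial_zero, Nat.cast_one, div_one, mul_one]
  linarith

lemma arcsin_le_pi_div_two_mul {x : ℝ} (hx₀ : 0 ≤ x) (hx₁ : x ≤ 1) :
    Real.arcsin x ≤ π / 2 * x := by
  have h := Real.mul_le_sin (Real.arcsin_nonneg.2 hx₀) (Real.arcsin_le_pi_div_two x)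
  rw [Real.sin_arcsin (by linarith) hx₁] at h
  rw [div_mul_eq_mul_div, le_div_iff₀ two_pos]
  have := Real.pi_pos
  calc Real.arcsin x * 2 = π * (2 / π * Real.arcsin x) := by field_simp
    _ ≤ π * x := by gcongr

lemma tendsto_natCast_sq_mul_div_rpow_atTop (c : ℝ) {α : ℝ} (hα : 2 < α) :
    Tendsto (fun N : ℕ ↦ (N : ℝ) ^ 2 * (c / (N : ℝ) ^ α)) atTop (𝓝 0) := by
  have h := ((tendsto_rpow_neg_atTop (by linarith : 0 < α - 2)).comp
    tendsto_natCast_atTop_atTop).const_mul c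
  rw [mul_zero] at h
  refine h.congr' ((eventually_gt_atTop 0).mono fun N hN ↦ ?_)
  have hN' : (0 : ℝ) < N := by exact_mod_cast hN
  simp only [Function.comp_apply, neg_sub]
  rw [Real.rpow_sub hN', ← Real.rpow_natCast, Nat.cast_ofNat]
  ring

section RandomIntersectionGraph

variable {Ω : Type*} [MeasurableSpace Ω] {P : Measure Ω} {X : ℕ → Ω → EuclideanSpace ℝ (Fin 3)}

lemma measurable_pairCount_angDist (hmeas : ∀ i, Measurable (X i)) (N : ℕ) (r : ℝ) :
    Measurable fun ω ↦ pairCount N (fun y z ↦ angDist y z ≤ r) (X · ω) :=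
  measurable_pairCount N fun i j ↦ measurableSet_le
    (Real.continuous_arccos.measurable.comp (Measurable.inner (𝕜 := ℝ) (hmeas i) (hmeas j)))
    measurable_const

lemma measure_pairCount_angDist_ne_zero_le [IsProbabilityMeasure P]
    (hmeas : ∀ i, Measurable (X i)) (hindep : iIndepFun X P)
    (hdist : ∀ i, P.map (X i) = sphereUniform) (N : ℕ) {r : ℝ} (hr₀ : 0 ≤ r) (hr : r ≤ π / 3) :
    P {ω | pairCount N (fun y z ↦ angDist y z ≤ r) (X · ω) ≠ 0} ≤
      N ^ 2 * ENNReal.ofReal ((16 * r) ^ 2) :=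
  measure_pairCount_ne_zero_le N fun i j hij ↦ measure_angDist_le_le (hmeas i) (hmeas j)
    (hindep.indepFun hij.ne) (hdist i) (hdist j) hr₀ hr

lemma tsum_abs_pairCount_angDist_sub_poisson_le [IsProbabilityMeasure P]
    (hmeas : ∀ i, Measurable (X i)) (hindep : iIndepFun X P)
    (hdist : ∀ i, P.map (X i) = sphereUniform) (N : ℕ) {p : ℝ} (hp₀ : 0 ≤ p)
    (hp : p ≤ 1 / 36) :
    ∑' k : ℕ, |(P {ω | pairCount N (fun y z ↦ angDist y z ≤ 2 * (2 * Real.arcsin √p))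
        (X · ω) = k}).toReal -
      Real.exp (-(2 * N * (N - 1) * p * (1 - p))) * (2 * N * (N - 1) * p * (1 - p)) ^ k /
        (k.factorial : ℝ)| ≤ (2048 * π ^ 2 + 4) * (N ^ 2 * p) := by
  set r := 2 * (2 * Real.arcsin √p)
  have hsqrt : √p ≤ 1 / 6 := by
    rw [Real.sqrt_le_left (by norm_num)]; linarith
  have hr : r ≤ 2 * π * √p := by
    linarith [arcsin_le_pi_div_two_mul (Real.sqrt_nonneg p) (by linarith)]
  have hr₀ : 0 ≤ r := by
    have := Real.arcsin_nonneg.2 (Real.sqrt_nonneg p)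
    positivity
  have hr_sq : (16 * r) ^ 2 ≤ 1024 * π ^ 2 * p := by
    calc (16 * r) ^ 2 ≤ (16 * (2 * π * √p)) ^ 2 := by gcongr
      _ = 1024 * π ^ 2 * p := by rw [mul_pow, mul_pow, Real.sq_sqrt hp₀]; ring
  have hN₀ : (0 : ℝ) ≤ N := N.cast_nonneg
  have hlam₀ : 0 ≤ 2 * N * (N - 1) * p * (1 - p) := by
    have hNN : (0 : ℝ) ≤ N * (N - 1) := by
      rcases N with _ | N
      · simp
      · push_cast; nlinarith
    have : 0 ≤ 1 - p := by linarith
    calc (0 : ℝ) ≤ 2 * (N * (N - 1)) * p * (1 - p) := by positivity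
      _ = _ := by ring
  have hlam : 2 * N * (N - 1) * p * (1 - p) ≤ 2 * (N ^ 2 * p) := by
    nlinarith [mul_nonneg hN₀ hp₀, mul_nonneg (mul_nonneg hN₀ hN₀) (mul_nonneg hp₀ hp₀)]
  have hnonzero : (P {ω | pairCount N (fun y z ↦ angDist y z ≤ r) (X · ω) ≠ 0}).toReal ≤
      N ^ 2 * (1024 * π ^ 2 * p) := by
    refine ENNReal.toReal_le_of_le_ofReal (by positivity) ((measure_pairCount_angDist_ne_zero_le
      hmeas hindep hdist N hr₀ (by nlinarith [Real.pi_pos])).trans ?_)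
    rw [ENNReal.ofReal_mul (by positivity), ENNReal.ofReal_pow hN₀, ENNReal.ofReal_natCast]
    gcongr
  refine (tsum_abs_measure_sub_poisson_le P (measurable_pairCount_angDist hmeas N r)
    hlam₀).trans ?_
  nlinarith [Real.pi_pos]

end RandomIntersectionGraph

/-- Theorem 3.1 (Poisson approximation): for `c > 0` and `α > 2`, with `p_N = c/N^α`,
cap radius `a_N = 2·arcsin √p_N`, `|𝓔_N|` the number of edges of `G_N` and
`λ_N = 2N(N-1)p_N(1-p_N)`, the total variation distance between the distribution of
`|𝓔_N|` and the Poisson distribution with parameter `λ_N` tends to `0` as `N → ∞`. -/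
theorem edges_poisson_approximation
    (c α : ℝ) (hc : 0 < c) (hα : 2 < α)
    {Ω : Type*} [MeasurableSpace Ω] (P : Measure Ω) [IsProbabilityMeasure P]
    (X : ℕ → Ω → EuclideanSpace ℝ (Fin 3))
    (hmeas : ∀ i, Measurable (X i))
    (hindep : ProbabilityTheory.iIndepFun X P)
    (hdist : ∀ i, Measure.map (X i) P = sphereUniform) :
    Filter.Tendsto (fun N : ℕ =>
      ∑' k : ℕ,
        |(P {ω | Set.ncard {q : ℕ × ℕ | q.1 < q.2 ∧ q.2 < N ∧
              angDist (X q.1 ω) (X q.2 ω) ≤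
                2 * (2 * Real.arcsin (Real.sqrt (c / (N : ℝ) ^ α)))} = k}).toReal -
          Real.exp (-(2 * (N : ℝ) * ((N : ℝ) - 1) * (c / (N : ℝ) ^ α) *
              (1 - c / (N : ℝ) ^ α))) *
            (2 * (N : ℝ) * ((N : ℝ) - 1) * (c / (N : ℝ) ^ α) *
              (1 - c / (N : ℝ) ^ α)) ^ k / (k.factorial : ℝ)|)
      Filter.atTop (nhds 0) := by
  have hp : Tendsto (fun N : ℕ ↦ c / (N : ℝ) ^ α) atTop (𝓝 0) :=
    tendsto_const_nhds.div_atTop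
      ((tendsto_rpow_atTop (by linarith)).comp tendsto_natCast_atTop_atTop)
  have hbound := (tendsto_natCast_sq_mul_div_rpow_atTop c hα).const_mul (2048 * π ^ 2 + 4)
  rw [mul_zero] at hbound
  refine squeeze_zero' (Eventually.of_forall fun N ↦ tsum_nonneg fun k ↦ abs_nonneg _) ?_ hbound
  filter_upwards [hp.eventually (eventually_le_nhds (by norm_num : (0 : ℝ) < 1 / 36))]
    with N hpN
  exact tsum_abs_pairCount_angDist_sub_poisson_le hmeas hindep hdist N (by positivity) hpN
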